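/- arXiv:2501.10887 — 2 statements merged into one kernel-verified Lean document; each statement's English description precedes it below -/
import Mathlib

section
/- A linear map d : V → V is a derivation of the Leibniz algebra L₁ if and only if there exist complex numbers a, b, c, f such that d(e₁) = a·e₁ + b·e₂ + c·e₃ + f·e₄, d(e₂) = 2a·e₂ + b·e₃ + c·e₄, d(e₃) = 3a·e₃ + b·e₄, and d(e₄) = 4a·e₄. Consequently, the space of derivations of L₁ is a 4-dimensional linear subspace of End(V). -/
/-- `V = ℂ⁴`. -/
abbrev V : Type := Fin 4 → ℂ

/-- standard basis: `e 0 = e₁`, ..., `e 3 = e₄`. -/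
def e (i : Fin 4) : V := Pi.single i 1

/-- Bracket of the Leibniz algebra `L₁`:
`⟦e₁,e₁⟧ = e₂`, `⟦e₂,e₁⟧ = e₃`, `⟦e₃,e₁⟧ = e₄`, all other basis products zero. -/
def br (x y : V) : V :=
  (x 0 * y 0) • e 1 + (x 1 * y 0) • e 2 + (x 2 * y 0) • e 3

/-- A derivation of `L₁`. -/
def IsDer (d : V →ₗ[ℂ] V) : Prop :=
  ∀ x y : V, d (br x y) = br (d x) y + br x (d y)

/-! `L₁` is generated by `e₁`: `e₂ = ⟦e₁,e₁⟧`, `e₃ = ⟦e₂,e₁⟧`, `e₄ = ⟦e₃,e₁⟧`. By the Leibniz rule a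
derivation is therefore determined by `d(e₁)`, and conversely every value `w` of `d(e₁)` extends to the
derivation `derivOf w` given by the displayed formulas. So `d ↦ d(e₁)` identifies the derivations with
`V` itself, which is where the four parameters and the dimension come from. -/

lemma br_eq (x y : V) : br x y = ![0, x 0 * y 0, x 1 * y 0, x 2 * y 0] := by
  ext j; fin_cases j <;> simp [br, e]

lemma br_e_castSucc_e_zero (i : Fin 3) : br (e i.castSucc) (e 0) = e i.succ := by
  ext j; fin_cases i <;> fin_cases j <;> simp [br_eq, e]

lemma ext_e {d d' : V →ₗ[ℂ] V} (h : ∀ i, d (e i) = d' (e i)) : d = d' :=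
  (Pi.basisFun ℂ (Fin 4)).ext fun i => by simpa only [Pi.basisFun_apply, e] using h i

theorem IsDer.ext_of_apply_e_zero {d d' : V →ₗ[ℂ] V} (hd : IsDer d) (hd' : IsDer d')
    (h : d (e 0) = d' (e 0)) : d = d' := by
  have hbasis (i : Fin 4) : d (e i) = d' (e i) := by
    induction i using Fin.induction with
    | zero => exact h
    | succ i ih => rw [← br_e_castSucc_e_zero, hd, hd', ih, h]
  exact ext_e hbasis

/-- `derivOf w` is the derivation sending `e₁` to `w`. -/
def derivOf : V →ₗ[ℂ] V →ₗ[ℂ] V :=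
  LinearMap.mk₂ ℂ
    (fun w v => ![w 0 * v 0, w 1 * v 0 + 2 * w 0 * v 1, w 2 * v 0 + w 1 * v 1 + 3 * w 0 * v 2,
      w 3 * v 0 + w 2 * v 1 + w 1 * v 2 + 4 * w 0 * v 3])
    (fun _ _ _ => by ext j; fin_cases j <;> simp <;> ring)
    (fun _ _ _ => by ext j; fin_cases j <;> simp <;> ring)
    (fun _ _ _ => by ext j; fin_cases j <;> simp <;> ring)
    (fun _ _ _ => by ext j; fin_cases j <;> simp <;> ring)

@[simp]
lemma derivOf_apply (w v : V) :
    derivOf w v = ![w 0 * v 0, w 1 * v 0 + 2 * w 0 * v 1, w 2 * v 0 + w 1 * v 1 + 3 * w 0 * v 2,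
      w 3 * v 0 + w 2 * v 1 + w 1 * v 2 + 4 * w 0 * v 3] :=
  rfl

lemma derivOf_apply_e_zero (w : V) : derivOf w (e 0) = w := by
  ext j; fin_cases j <;> simp [e]

lemma derivOf_injective : Function.Injective derivOf := fun w w' h => by
  simpa only [derivOf_apply_e_zero] using LinearMap.congr_fun h (e 0)

lemma isDer_derivOf (w : V) : IsDer (derivOf w) := by
  intro x y
  ext j; fin_cases j <;> simp [br_eq] <;> ring

lemma isDer_iff_exists_eq_derivOf (d : V →ₗ[ℂ] V) : IsDer d ↔ ∃ w, d = derivOf w := by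
  refine ⟨fun hd => ⟨d (e 0), ?_⟩, by rintro ⟨w, rfl⟩; exact isDer_derivOf w⟩
  exact hd.ext_of_apply_e_zero (isDer_derivOf _) (derivOf_apply_e_zero _).symm

lemma derivOf_apply_e (a b c f : ℂ) :
    derivOf ![a, b, c, f] (e 0) = a • e 0 + b • e 1 + c • e 2 + f • e 3 ∧
      derivOf ![a, b, c, f] (e 1) = (2 * a) • e 1 + b • e 2 + c • e 3 ∧
      derivOf ![a, b, c, f] (e 2) = (3 * a) • e 2 + b • e 3 ∧
      derivOf ![a, b, c, f] (e 3) = (4 * a) • e 3 := by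
  refine ⟨?_, ?_, ?_, ?_⟩ <;> ext j <;> fin_cases j <;> simp [e]

lemma eq_derivOf_iff (d : V →ₗ[ℂ] V) (a b c f : ℂ) :
    d = derivOf ![a, b, c, f] ↔
      d (e 0) = a • e 0 + b • e 1 + c • e 2 + f • e 3 ∧
      d (e 1) = (2 * a) • e 1 + b • e 2 + c • e 3 ∧
      d (e 2) = (3 * a) • e 2 + b • e 3 ∧
      d (e 3) = (4 * a) • e 3 := by
  obtain ⟨g0, g1, g2, g3⟩ := derivOf_apply_e a b c f
  refine ⟨by rintro rfl; exact ⟨g0, g1, g2, g3⟩, fun ⟨h0, h1, h2, h3⟩ => ext_e fun i => ?_⟩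
  fin_cases i
  exacts [h0.trans g0.symm, h1.trans g1.symm, h2.trans g2.symm, h3.trans g3.symm]

theorem derivations_of_L1 :
    (∀ d : V →ₗ[ℂ] V, IsDer d ↔ ∃ a b c f : ℂ,
      d (e 0) = a • e 0 + b • e 1 + c • e 2 + f • e 3 ∧
      d (e 1) = (2 * a) • e 1 + b • e 2 + c • e 3 ∧
      d (e 2) = (3 * a) • e 2 + b • e 3 ∧
      d (e 3) = (4 * a) • e 3) ∧
    ∃ S : Submodule ℂ (V →ₗ[ℂ] V),
      (S : Set (V →ₗ[ℂ] V)) = {d | IsDer d} ∧ Module.finrank ℂ S = 4 := by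
  refine ⟨fun d => ?_, LinearMap.range derivOf, ?_, ?_⟩
  · simp only [← eq_derivOf_iff, isDer_iff_exists_eq_derivOf]
    refine ⟨fun ⟨w, hw⟩ => ⟨w 0, w 1, w 2, w 3, ?_⟩, fun ⟨a, b, c, f, h⟩ => ⟨_, h⟩⟩
    rw [hw]; congr; ext j; fin_cases j <;> rfl
  · ext d
    simp [isDer_iff_exists_eq_derivOf, eq_comm]
  · rw [LinearMap.finrank_range_of_inj derivOf_injective, Module.finrank_fin_fun]
end

section
/- A linear map D : V → V is an antiderivation of the Leibniz algebra L₁ if and only if D(e₁) lies in the span of e₂, e₃, e₄ and D(e₂) = D(e₃) = D(e₄) = 0. Consequently, the space of antiderivations of L₁ is a 3-dimensional linear subspace of End(V). -/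
/-- An antiderivation. -/
def IsAntiDer (D : V →ₗ[ℂ] V) : Prop :=
  ∀ x y : V, D (br x y) = br x (D y) - br y (D x)

/-!
The bracket `⟦x, y⟧` only sees the first coordinate `y₁` of `y` and lands in `span {e₂, e₃, e₄}`.
Testing the antiderivation identity on `(e₁, e₁)`, `(e₁, e₂)`, `(e₂, e₁)`, `(e₃, e₁)` forces
`D e₂ = 0`, `D(e₁)₁ = 0`, `D e₃ = 0`, `D e₄ = 0`, so `D x = x₁ • v` with `v₁ = 0`; conversely
every such map kills both sides of the identity. Hence `v ↦ (x ↦ x₁ • v)` identifies the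
antiderivations with the hyperplane `{v | v₁ = 0}`, which has dimension 3.
-/

lemma e_apply (i j : Fin 4) : e i j = if j = i then 1 else 0 := Pi.single_apply i 1 j

lemma br_apply_zero (x y : V) : br x y 0 = 0 := by
  simp [br, e]

lemma br_eq_zero_of_apply_zero (x : V) {y : V} (hy : y 0 = 0) : br x y = 0 := by
  simp [br, hy]

lemma br_e_zero (v : V) : br (e 0) v = v 0 • e 1 := by
  simp [br, e]

lemma br_e_one (v : V) : br (e 1) v = v 0 • e 2 := by
  simp [br, e]

lemma br_e_two (v : V) : br (e 2) v = v 0 • e 3 := by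
  simp [br, e]

lemma span_e_eq_ker_proj_zero :
    Submodule.span ℂ {e 1, e 2, e 3} = LinearMap.ker (LinearMap.proj 0 : V →ₗ[ℂ] ℂ) := by
  apply le_antisymm
  · simp [Submodule.span_le, Set.insert_subset_iff, e]
  · intro v (hv : v 0 = 0)
    have hv_eq : v = v 1 • e 1 + v 2 • e 2 + v 3 • e 3 := by
      funext j; fin_cases j <;> simp [e, hv]
    rw [hv_eq]
    refine add_mem (add_mem ?_ ?_) ?_ <;>
      exact Submodule.smul_mem _ _ (Submodule.subset_span (by simp))

lemma finrank_ker_proj_zero :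
    Module.finrank ℂ (LinearMap.ker (LinearMap.proj 0 : V →ₗ[ℂ] ℂ)) = 3 := by
  have := (LinearMap.proj 0 : V →ₗ[ℂ] ℂ).finrank_range_add_finrank_ker
  rw [LinearMap.range_eq_top.mpr (LinearMap.proj_surjective 0), finrank_top, Module.finrank_self,
    Module.finrank_fin_fun] at this
  omega

noncomputable def projZeroSmulRight : V →ₗ[ℂ] V →ₗ[ℂ] V :=
  LinearMap.smulRightₗ (LinearMap.proj 0)

lemma projZeroSmulRight_apply (v x : V) : projZeroSmulRight v x = x 0 • v := rfl

lemma projZeroSmulRight_injective : Function.Injective projZeroSmulRight := fun v w h ↦ by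
  simpa [projZeroSmulRight_apply, e] using LinearMap.congr_fun h (e 0)

lemma projZeroSmulRight_apply_e_zero (D : V →ₗ[ℂ] V)
    (h1 : D (e 1) = 0) (h2 : D (e 2) = 0) (h3 : D (e 3) = 0) :
    projZeroSmulRight (D (e 0)) = D := by
  refine (Pi.basisFun ℂ (Fin 4)).ext fun i ↦ ?_
  rw [Pi.basisFun_apply, ← e, projZeroSmulRight_apply]
  fin_cases i <;> simp [e_apply, *]

lemma isAntiDer_projZeroSmulRight {v : V} (hv : v 0 = 0) : IsAntiDer (projZeroSmulRight v) := by
  intro x y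
  have hcoord (z : V) : projZeroSmulRight v z 0 = 0 := by simp [projZeroSmulRight_apply, hv]
  simp only [projZeroSmulRight_apply _ (br x y), br_apply_zero, zero_smul,
    br_eq_zero_of_apply_zero _ (hcoord _), sub_self]

lemma IsAntiDer.apply_e {D : V →ₗ[ℂ] V} (hD : IsAntiDer D) :
    D (e 0) 0 = 0 ∧ D (e 1) = 0 ∧ D (e 2) = 0 ∧ D (e 3) = 0 := by
  have h00 := hD (e 0) (e 0)
  have h01 := hD (e 0) (e 1)
  have h10 := hD (e 1) (e 0)
  have h20 := hD (e 2) (e 0)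
  simp only [br_e_zero, br_e_one, br_e_two, e_apply, ↓reduceIte, zero_ne_one,
    one_smul, zero_smul, sub_self, map_zero] at h00 h01 h10 h20
  have hD1 : D (e 1) = 0 := h00
  have hD00 : D (e 0) 0 = 0 := by simpa [e_apply, hD1] using congrFun h01 2
  have hD2 : D (e 2) = 0 := by rw [h10, hD00, hD1]; simp
  have hD3 : D (e 3) = 0 := by rw [h20, hD00, hD2]; simp
  exact ⟨hD00, hD1, hD2, hD3⟩

lemma isAntiDer_iff (D : V →ₗ[ℂ] V) :
    IsAntiDer D ↔ D (e 0) 0 = 0 ∧ D (e 1) = 0 ∧ D (e 2) = 0 ∧ D (e 3) = 0 := by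
  refine ⟨IsAntiDer.apply_e, fun ⟨h0, h1, h2, h3⟩ ↦ ?_⟩
  rw [← projZeroSmulRight_apply_e_zero D h1 h2 h3]
  exact isAntiDer_projZeroSmulRight h0

lemma isAntiDer_iff_mem_map (D : V →ₗ[ℂ] V) :
    IsAntiDer D ↔ D ∈ (LinearMap.ker (LinearMap.proj 0 : V →ₗ[ℂ] ℂ)).map projZeroSmulRight := by
  refine ⟨fun hD ↦ ?_, ?_⟩
  · obtain ⟨h0, h1, h2, h3⟩ := IsAntiDer.apply_e hD
    exact ⟨D (e 0), h0, projZeroSmulRight_apply_e_zero D h1 h2 h3⟩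
  · rintro ⟨v, hv, rfl⟩
    exact isAntiDer_projZeroSmulRight hv

theorem antiderivations_of_L1 :
    (∀ D : V →ₗ[ℂ] V, IsAntiDer D ↔
      D (e 0) ∈ Submodule.span ℂ {e 1, e 2, e 3} ∧
      D (e 1) = 0 ∧ D (e 2) = 0 ∧ D (e 3) = 0) ∧
    ∃ S : Submodule ℂ (V →ₗ[ℂ] V),
      (S : Set (V →ₗ[ℂ] V)) = {D | IsAntiDer D} ∧ Module.finrank ℂ S = 3 := by
  refine ⟨fun D ↦ ?_, (LinearMap.ker (LinearMap.proj 0)).map projZeroSmulRight, ?_, ?_⟩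
  · rw [isAntiDer_iff, span_e_eq_ker_proj_zero, LinearMap.mem_ker, LinearMap.proj_apply]
  · ext D
    exact (isAntiDer_iff_mem_map D).symm
  · rw [← (Submodule.equivMapOfInjective _ projZeroSmulRight_injective _).finrank_eq,
      finrank_ker_proj_zero]
end
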